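/- arXiv:1807.03614 — 3 statements merged into one kernel-verified Lean document; each statement's English description precedes it below -/
import Mathlib

section
/- Let d ≥ 2, let C, D ∈ C^d_* be closed convex cones of positive dimension, and let R > 0. Let B_R denote the closed ball of radius R centered at o. Then the Euclidean Hausdorff distance of the convex bodies C ∩ B_R and D ∩ B_R satisfies δ(C ∩ B_R, D ∩ B_R) ≤ R · δ_a(C,D). -/
open Set MeasureTheory
open scoped RealInnerProductSpace ENNReal NNReal

attribute [local instance] Classical.propDecidable

noncomputable section

/-- `ℝ^d` with its Euclidean structure. -/
abbrev Euc (d : ℕ) := EuclideanSpace ℝ (Fin d)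

/-- A closed convex cone (with apex `o`) in `ℝ^d`. -/
def IsClosedConvexCone {d : ℕ} (C : Set (Euc d)) : Prop :=
  C.Nonempty ∧ IsClosed C ∧ Convex ℝ C ∧ ∀ x ∈ C, ∀ r : ℝ, 0 ≤ r → r • x ∈ C

/-- A cone has positive dimension iff it contains a nonzero point. -/
def PosDim {d : ℕ} (C : Set (Euc d)) : Prop := ∃ x ∈ C, x ≠ 0

/-- The dual (polar) cone `C° = {x : ⟪x,y⟫ ≤ 0 ∀ y ∈ C}`. -/
def dualCone {d : ℕ} (C : Set (Euc d)) : Set (Euc d) :=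
  {x | ∀ y ∈ C, ⟪x, y⟫ ≤ 0}

/-- The metric projection (nearest point map) onto a set; junk value `0` if
no nearest point exists.  For a nonempty closed convex set this is the usual
(unique) nearest-point map. -/
def metricProj {d : ℕ} (C : Set (Euc d)) (x : Euc d) : Euc d :=
  if h : ∃ y ∈ C, ∀ z ∈ C, dist x y ≤ dist x z then h.choose else 0

/-- The angular distance `d_a(x, C) = arccos (‖Π_C x‖ / ‖x‖)` for `x ≠ o`,
and `d_a(o, C) = π/2`. -/
def angDist {d : ℕ} (C : Set (Euc d)) (x : Euc d) : ℝ :=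
  if x = 0 then Real.pi / 2 else Real.arccos (‖metricProj C x‖ / ‖x‖)

/-- The angular parallel set `C_λ^a = {x : d_a(x,C) ≤ λ}`. -/
def angParallel {d : ℕ} (C : Set (Euc d)) (l : ℝ) : Set (Euc d) :=
  {x | angDist C x ≤ l}

/-- The angular Hausdorff distance
`δ_a(C,D) = min {λ ≥ 0 : C ⊆ D_λ^a, D ⊆ C_λ^a}`. -/
def angHaus {d : ℕ} (C D : Set (Euc d)) : ℝ :=
  sInf {l : ℝ | 0 ≤ l ∧ C ⊆ angParallel D l ∧ D ⊆ angParallel C l}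

/-- The standard Gaussian measure `γ_d` on `ℝ^d`. -/
def stdGaussian (d : ℕ) : Measure (Euc d) :=
  volume.withDensity fun x =>
    ENNReal.ofReal ((2 * Real.pi) ^ (-(d : ℝ) / 2) * Real.exp (-‖x‖ ^ 2 / 2))

/-- The biconic σ-algebra on `ℝ^d × ℝ^d`: Borel sets invariant under
separate positive scaling of the two components. -/
def biconicMS (d : ℕ) : MeasurableSpace (Euc d × Euc d) where
  MeasurableSet' η := MeasurableSet η ∧
    ∀ p ∈ η, ∀ a b : ℝ, 0 < a → 0 < b → (a • p.1, b • p.2) ∈ η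
  measurableSet_empty := ⟨MeasurableSet.empty, fun p hp => absurd hp (notMem_empty p)⟩
  measurableSet_compl := by
    rintro η ⟨hm, hinv⟩
    refine ⟨hm.compl, ?_⟩
    rintro p hp a b ha hb hmem
    apply hp
    have h2 := hinv _ hmem a⁻¹ b⁻¹ (by positivity) (by positivity)
    simpa [smul_smul, inv_mul_cancel₀ ha.ne', inv_mul_cancel₀ hb.ne'] using h2
  measurableSet_iUnion := by
    rintro s hs
    refine ⟨MeasurableSet.iUnion fun i => (hs i).1, ?_⟩
    rintro p hp a b ha hb
    obtain ⟨i, hi⟩ := mem_iUnion.1 hp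
    exact mem_iUnion.2 ⟨i, (hs i).2 p hi a b ha hb⟩

/-- A polyhedral cone: a finite intersection of closed halfspaces with `o`
on their boundary. -/
def IsPolyhedralCone {d : ℕ} (C : Set (Euc d)) : Prop :=
  ∃ (n : ℕ) (u : Fin n → Euc d), C = {x | ∀ i, ⟪x, u i⟫ ≤ 0}

/-- A face of a cone `C`: either `C` itself or the intersection of `C` with a
supporting hyperplane of `C` through `o`. -/
def IsFaceOf {d : ℕ} (C F : Set (Euc d)) : Prop :=
  F = C ∨ ∃ u : Euc d, u ≠ 0 ∧ (∀ x ∈ C, ⟪u, x⟫ ≤ 0) ∧ F = C ∩ {x | ⟪u, x⟫ = 0}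

/-- Relative interior of a set containing `o` (relative to its linear span). -/
def relint {d : ℕ} (S : Set (Euc d)) : Set (Euc d) :=
  {x ∈ S | ∃ ε > 0, ∀ y ∈ (Submodule.span ℝ S : Set (Euc d)), dist y x < ε → y ∈ S}

/-- The `k`-skeleton of a polyhedral cone: the union of the relative interiors
of its `k`-dimensional faces. -/
def skel {d : ℕ} (C : Set (Euc d)) (k : ℕ) : Set (Euc d) :=
  ⋃ F ∈ {F | IsFaceOf C F ∧ Module.finrank ℝ (Submodule.span ℝ F) = k}, relint F

/-- The conic support measure
`Ω_k(C,η) = P{Π_C(g) ∈ skel_k C, (Π_C(g), Π_{C°}(g)) ∈ η}`. -/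
def conicSuppMeasure {d : ℕ} (C : Set (Euc d)) (k : ℕ) (η : Set (Euc d × Euc d)) : ℝ≥0∞ :=
  stdGaussian d {x | metricProj C x ∈ skel C k ∧
    (metricProj C x, metricProj (dualCone C) x) ∈ η}

/-- `φ_f(C,η) = E [f(‖Π_C g‖², ‖Π_{C°} g‖²) · 1_η (Π_C g, Π_{C°} g)]` for a
standard Gaussian vector `g`. -/
def phiF {d : ℕ} (C : Set (Euc d)) (f : ℝ → ℝ → ℝ) (η : Set (Euc d × Euc d)) : ℝ≥0∞ :=
  ∫⁻ x, ENNReal.ofReal (f (‖metricProj C x‖ ^ 2) (‖metricProj (dualCone C) x‖ ^ 2)) *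
      η.indicator (fun _ => (1 : ℝ≥0∞)) (metricProj C x, metricProj (dualCone C) x)
    ∂ stdGaussian d

/-- `ω_j = 2 π^{j/2} / Γ(j/2)`, the total spherical Lebesgue measure of `S^{j-1}`. -/
def sphVol (j : ℕ) : ℝ := 2 * Real.pi ^ ((j : ℝ) / 2) / Real.Gamma ((j : ℝ) / 2)

/-- The coefficient functions `g_k` of the conic Steiner formula:
`g_k(λ) = (ω_k ω_{d-k} / ω_d) ∫_0^λ cos^{k-1} φ sin^{d-k-1} φ dφ` for
`1 ≤ k ≤ d-1`, and `g_d ≡ 1`. -/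
def gcoef (d k : ℕ) (l : ℝ) : ℝ :=
  if k = d then 1
  else (sphVol k * sphVol (d - k) / sphVol d) *
    ∫ t in (0:ℝ)..l, Real.cos t ^ (k - 1) * Real.sin t ^ (d - k - 1)

/-- The angular local parallel set
`M_λ^a(C,η) = {x : d_a(x,C) ≤ λ, (Π_C x, Π_{C°} x) ∈ η}`. -/
def angLocParallel {d : ℕ} (C : Set (Euc d)) (l : ℝ) (η : Set (Euc d × Euc d)) : Set (Euc d) :=
  {x | angDist C x ≤ l ∧ (metricProj C x, metricProj (dualCone C) x) ∈ η}

/-- The homogeneous extension of a function on `S^{d-1} × S^{d-1}`: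
`f_h(x,y) = f(x/‖x‖, y/‖y‖)` for `x, y ≠ o`, and `0` otherwise. -/
def homExt {d : ℕ} (f : Metric.sphere (0 : Euc d) 1 × Metric.sphere (0 : Euc d) 1 → ℝ)
    (p : Euc d × Euc d) : ℝ :=
  if h : p.1 ≠ 0 ∧ p.2 ≠ 0 then
    f (⟨‖p.1‖⁻¹ • p.1, by
          rw [mem_sphere_zero_iff_norm, norm_smul, norm_inv, norm_norm]
          exact inv_mul_cancel₀ (norm_ne_zero_iff.mpr h.1)⟩,
       ⟨‖p.2‖⁻¹ • p.2, by
          rw [mem_sphere_zero_iff_norm, norm_smul, norm_inv, norm_norm]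
          exact inv_mul_cancel₀ (norm_ne_zero_iff.mpr h.2)⟩)
  else 0

/-- The angle between two vectors: `arccos ⟪x/‖x‖, y/‖y‖⟫` for `x, y ≠ o`,
with `d_a(o,o) = 0` and `d_a(x,o) = d_a(o,x) = π/2` for `x ≠ o`. -/
def vecAngle {d : ℕ} (x y : Euc d) : ℝ :=
  if x = 0 ∧ y = 0 then 0
  else if x = 0 ∨ y = 0 then Real.pi / 2
  else Real.arccos ⟪‖x‖⁻¹ • x, ‖y‖⁻¹ • y⟫

/-- Membership in the class `F_bL`: functions on `S^{d-1} × S^{d-1}` with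
Lipschitz constant `≤ 1` (w.r.t. the Euclidean norm on `ℝ^d × ℝ^d`) and
sup-norm `≤ 1`. -/
def memFbL {d : ℕ} (f : Metric.sphere (0 : Euc d) 1 × Metric.sphere (0 : Euc d) 1 → ℝ) : Prop :=
  (∀ a b, |f a - f b| ≤
    Real.sqrt (‖(a.1 : Euc d) - (b.1 : Euc d)‖ ^ 2 + ‖(a.2 : Euc d) - (b.2 : Euc d)‖ ^ 2)) ∧
  ∀ a, |f a| ≤ 1

/-
If `x ∈ C ∩ B_R` lies within angular distance `λ` of `D`, its metric projection `p` onto `D`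
satisfies `⟪x - p, p⟫ = 0`. Hence `‖p‖ ≤ ‖x‖ ≤ R`, so `p ∈ D ∩ B_R`, and
`‖x - p‖ = ‖x‖ sin d_a(x, D) ≤ R λ`.
-/

section MetricProj

variable {d : ℕ} {C : Set (Euc d)}

lemma exists_forall_dist_le_of_isClosed (hcl : IsClosed C) (hne : C.Nonempty) (x : Euc d) :
    ∃ y ∈ C, ∀ z ∈ C, dist x y ≤ dist x z := by
  obtain ⟨y, hy, hdist⟩ := hcl.exists_infDist_eq_dist hne x
  exact ⟨y, hy, fun z hz => hdist ▸ Metric.infDist_le_dist_of_mem hz⟩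

lemma metricProj_mem (hcl : IsClosed C) (hne : C.Nonempty) (x : Euc d) :
    metricProj C x ∈ C := by
  have hex := exists_forall_dist_le_of_isClosed hcl hne x
  rw [metricProj, dif_pos hex]
  exact hex.choose_spec.1

lemma dist_metricProj_le (hcl : IsClosed C) (hne : C.Nonempty) (x : Euc d) {z : Euc d}
    (hz : z ∈ C) : dist x (metricProj C x) ≤ dist x z := by
  have hex := exists_forall_dist_le_of_isClosed hcl hne x
  rw [metricProj, dif_pos hex]
  exact hex.choose_spec.2 z hz

lemma angDist_nonneg (C : Set (Euc d)) (x : Euc d) : 0 ≤ angDist C x := by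
  unfold angDist
  split_ifs
  exacts [by positivity, Real.arccos_nonneg _]

lemma angDist_le_pi_div_two (C : Set (Euc d)) (x : Euc d) : angDist C x ≤ Real.pi / 2 := by
  unfold angDist
  split_ifs
  exacts [le_rfl, Real.arccos_le_pi_div_two.2 (by positivity)]

end MetricProj

namespace IsClosedConvexCone

variable {d : ℕ} {C : Set (Euc d)}

lemma zero_mem (hC : IsClosedConvexCone C) : (0 : Euc d) ∈ C := by
  obtain ⟨⟨y, hy⟩, -, -, hsmul⟩ := hC
  simpa using hsmul y hy 0 le_rfl

lemma metricProj_mem (hC : IsClosedConvexCone C) (x : Euc d) : metricProj C x ∈ C :=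
  _root_.metricProj_mem hC.2.1 hC.1 x

/-- Test the variational inequality `⟪x - p, w - p⟫ ≤ 0` of the projection at `w = 0`
and at `w = 2p`. -/
lemma inner_sub_metricProj_metricProj (hC : IsClosedConvexCone C) (x : Euc d) :
    ⟪x - metricProj C x, metricProj C x⟫ = 0 := by
  set p := metricProj C x
  have hp : p ∈ C := hC.metricProj_mem x
  have : Nonempty C := ⟨⟨p, hp⟩⟩
  have hbdd : BddBelow (range fun w : C => ‖x - w‖) := ⟨0, by rintro _ ⟨w, rfl⟩; positivity⟩
  have hinf : ‖x - p‖ = ⨅ w : C, ‖x - w‖ := by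
    refine le_antisymm (le_ciInf fun w => ?_) (ciInf_le hbdd ⟨p, hp⟩)
    simpa [dist_eq_norm] using dist_metricProj_le hC.2.1 hC.1 x w.2
  have hvar := (norm_eq_iInf_iff_real_inner_le_zero hC.2.2.1 hp).1 hinf
  have h0 := hvar 0 hC.zero_mem
  have h2 := hvar ((2 : ℝ) • p) (hC.2.2.2 p hp 2 zero_le_two)
  rw [zero_sub, inner_neg_right] at h0
  rw [two_smul, add_sub_cancel_right] at h2
  linarith

lemma norm_sub_metricProj_sq (hC : IsClosedConvexCone C) (x : Euc d) :
    ‖x - metricProj C x‖ ^ 2 = ‖x‖ ^ 2 - ‖metricProj C x‖ ^ 2 := by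
  have h := norm_add_sq_eq_norm_sq_add_norm_sq_real (hC.inner_sub_metricProj_metricProj x)
  rw [sub_add_cancel] at h
  linarith

lemma norm_metricProj_le (hC : IsClosedConvexCone C) (x : Euc d) :
    ‖metricProj C x‖ ≤ ‖x‖ :=
  (pow_le_pow_iff_left₀ (norm_nonneg _) (norm_nonneg _) two_ne_zero).1 <| by
    linarith [hC.norm_sub_metricProj_sq x, sq_nonneg ‖x - metricProj C x‖]

lemma dist_metricProj_le_norm_mul_angDist (hC : IsClosedConvexCone C) (x : Euc d) :
    dist x (metricProj C x) ≤ ‖x‖ * angDist C x := by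
  by_cases hx : x = 0
  · subst hx
    have hp : metricProj C 0 = 0 := by simpa using hC.norm_metricProj_le 0
    simp [hp]
  have hxpos : 0 < ‖x‖ := norm_pos_iff.2 hx
  set θ := angDist C x
  have hθ : θ = Real.arccos (‖metricProj C x‖ / ‖x‖) := if_neg hx
  have hcos : ‖x‖ * Real.cos θ = ‖metricProj C x‖ := by
    rw [hθ, Real.cos_arccos (by linarith [div_nonneg (norm_nonneg (metricProj C x)) hxpos.le])
      ((div_le_one hxpos).2 (hC.norm_metricProj_le x))]
    field_simp
  have hsin : 0 ≤ Real.sin θ :=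
    Real.sin_nonneg_of_nonneg_of_le_pi (angDist_nonneg C x) (hθ ▸ Real.arccos_le_pi _)
  have hdist : dist x (metricProj C x) = ‖x‖ * Real.sin θ := by
    rw [dist_eq_norm, ← sq_eq_sq₀ (norm_nonneg _) (by positivity), hC.norm_sub_metricProj_sq,
      ← hcos, mul_pow, mul_pow]
    linear_combination (-‖x‖ ^ 2) * Real.sin_sq_add_cos_sq θ
  rw [hdist]
  exact mul_le_mul_of_nonneg_left (Real.sin_le (angDist_nonneg C x)) hxpos.le

lemma infDist_inter_closedBall_le (hC : IsClosedConvexCone C) {R : ℝ} {x : Euc d}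
    (hx : x ∈ Metric.closedBall (0 : Euc d) R) :
    Metric.infDist x (C ∩ Metric.closedBall 0 R) ≤ R * angDist C x := by
  rw [mem_closedBall_zero_iff] at hx
  have hp : metricProj C x ∈ C ∩ Metric.closedBall 0 R :=
    ⟨hC.metricProj_mem x, mem_closedBall_zero_iff.2 ((hC.norm_metricProj_le x).trans hx)⟩
  calc Metric.infDist x (C ∩ Metric.closedBall 0 R)
      ≤ dist x (metricProj C x) := Metric.infDist_le_dist_of_mem hp
    _ ≤ ‖x‖ * angDist C x := hC.dist_metricProj_le_norm_mul_angDist x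
    _ ≤ R * angDist C x := mul_le_mul_of_nonneg_right hx (angDist_nonneg C x)

end IsClosedConvexCone

lemma hausdorffDist_inter_closedBall_le_of_subset_angParallel {d : ℕ} {C D : Set (Euc d)}
    (hC : IsClosedConvexCone C) (hD : IsClosedConvexCone D) {R l : ℝ} (hR : 0 ≤ R) (hl : 0 ≤ l)
    (hCD : C ⊆ angParallel D l) (hDC : D ⊆ angParallel C l) :
    Metric.hausdorffDist (C ∩ Metric.closedBall (0 : Euc d) R)
      (D ∩ Metric.closedBall 0 R) ≤ R * l := by
  refine Metric.hausdorffDist_le_of_infDist (mul_nonneg hR hl) ?_ ?_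
  · rintro x ⟨hxC, hxR⟩
    exact (hD.infDist_inter_closedBall_le hxR).trans (mul_le_mul_of_nonneg_left (hCD hxC) hR)
  · rintro x ⟨hxD, hxR⟩
    exact (hC.infDist_inter_closedBall_le hxR).trans (mul_le_mul_of_nonneg_left (hDC hxD) hR)

theorem hausdorffDist_inter_closedBall_le_general {d : ℕ} (C D : Set (Euc d))
    (hC : IsClosedConvexCone C)
    (hD : IsClosedConvexCone D)
    (R : ℝ) (hR : 0 < R) :
    Metric.hausdorffDist (C ∩ Metric.closedBall (0 : Euc d) R)
        (D ∩ Metric.closedBall (0 : Euc d) R) ≤ R * angHaus C D := by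
  have hpi : Real.pi / 2 ∈ {l : ℝ | 0 ≤ l ∧ C ⊆ angParallel D l ∧ D ⊆ angParallel C l} :=
    ⟨Real.pi_div_two_pos.le, fun x _ => angDist_le_pi_div_two D x,
      fun x _ => angDist_le_pi_div_two C x⟩
  rw [angHaus, ← smul_eq_mul, ← Real.sInf_smul_of_nonneg hR.le]
  refine le_csInf (Set.nonempty_of_mem hpi).smul_set ?_
  rintro _ ⟨l, ⟨hl, hCD, hDC⟩, rfl⟩
  exact hausdorffDist_inter_closedBall_le_of_subset_angParallel hC hD hR.le hl hCD hDC

/-- For closed convex cones `C, D` of positive dimension and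
`R > 0`, the Euclidean Hausdorff distance of the truncated cones satisfies
`δ(C ∩ B_R, D ∩ B_R) ≤ R · δ_a(C,D)`. -/
theorem hausdorffDist_inter_closedBall_le {d : ℕ} (hd : 2 ≤ d) (C D : Set (Euc d))
    (hC : IsClosedConvexCone C) (hCp : PosDim C)
    (hD : IsClosedConvexCone D) (hDp : PosDim D)
    (R : ℝ) (hR : 0 < R) :
    Metric.hausdorffDist (C ∩ Metric.closedBall (0 : Euc d) R)
        (D ∩ Metric.closedBall (0 : Euc d) R) ≤ R * angHaus C D :=
  hausdorffDist_inter_closedBall_le_general C D hC hD R hR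
end
end

section
/- Let d ≥ 2, let C, D ∈ C^d_* be closed convex cones of positive dimension, and let x ∈ ℝ^d. Then ‖Π_C(x) − Π_D(x)‖ ≤ ‖x‖ · √(10 δ_a(C,D)). -/
open Set MeasureTheory
open scoped RealInnerProductSpace ENNReal NNReal

attribute [local instance] Classical.propDecidable

noncomputable section

/-! The projections `p = Π_C x` and `q = Π_D x` satisfy
`‖p - q‖² = ⟪x - p, q - p⟫ + ⟪x - q, p - q⟫`. By the variational inequality for `Π_C`, the first
term is at most `‖x - p‖ ‖q - Π_C q‖`, and `q ∈ D` lies within angle `δ = δ_a(C, D)` of `C`, so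
`‖q - Π_C q‖ ≤ ‖q‖ sin δ`. Hence `‖p - q‖² ≤ 2 ‖x‖² sin δ ≤ 10 δ ‖x‖²`. -/

lemma norm_sub_sq_eq_inner_add_inner {E : Type*} [NormedAddCommGroup E] [InnerProductSpace ℝ E]
    (x p q : E) : ‖p - q‖ ^ 2 = ⟪x - p, q - p⟫ + ⟪x - q, p - q⟫ := by
  rw [← real_inner_self_eq_norm_sq]
  simp only [inner_sub_left, inner_sub_right, real_inner_comm]
  ring

section ConvexSet

variable {d : ℕ} {C : Set (Euc d)}

lemma exists_forall_dist_le_of_convex (hne : C.Nonempty) (hcl : IsClosed C)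
    (hconv : Convex ℝ C) (x : Euc d) : ∃ y ∈ C, ∀ z ∈ C, dist x y ≤ dist x z := by
  obtain ⟨y, hy, hyinf⟩ := exists_norm_eq_iInf_of_complete_convex hne hcl.isComplete hconv x
  refine ⟨y, hy, fun z hz => ?_⟩
  rw [dist_eq_norm, dist_eq_norm, hyinf]
  exact ciInf_le ⟨0, by rintro _ ⟨w, rfl⟩; exact norm_nonneg _⟩ (⟨z, hz⟩ : C)

lemma metricProj_mem_and_forall_dist_le (hne : C.Nonempty) (hcl : IsClosed C)
    (hconv : Convex ℝ C) (x : Euc d) :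
    metricProj C x ∈ C ∧ ∀ z ∈ C, dist x (metricProj C x) ≤ dist x z := by
  have h := exists_forall_dist_le_of_convex hne hcl hconv x
  rw [metricProj, dif_pos h]
  exact h.choose_spec

lemma inner_sub_metricProj_sub_metricProj_nonpos (hne : C.Nonempty) (hcl : IsClosed C)
    (hconv : Convex ℝ C) (x : Euc d) :
    ∀ z ∈ C, ⟪x - metricProj C x, z - metricProj C x⟫ ≤ 0 := by
  obtain ⟨hp, hmin⟩ := metricProj_mem_and_forall_dist_le hne hcl hconv x
  refine (norm_eq_iInf_iff_real_inner_le_zero hconv hp).1 ?_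
  have : Nonempty C := ⟨⟨_, hp⟩⟩
  refine le_antisymm (le_ciInf fun w => ?_)
    (ciInf_le ⟨0, by rintro _ ⟨w, rfl⟩; exact norm_nonneg _⟩ (⟨_, hp⟩ : C))
  simpa only [dist_eq_norm] using hmin w w.2

lemma inner_sub_metricProj_le_mul_norm (hne : C.Nonempty) (hcl : IsClosed C)
    (hconv : Convex ℝ C) (x z : Euc d) :
    ⟪x - metricProj C x, z - metricProj C x⟫
      ≤ ‖x - metricProj C x‖ * ‖z - metricProj C z‖ :=
  calc ⟪x - metricProj C x, z - metricProj C x⟫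
      = ⟪x - metricProj C x, z - metricProj C z⟫
        + ⟪x - metricProj C x, metricProj C z - metricProj C x⟫ := by
        rw [← inner_add_right, sub_add_sub_cancel]
    _ ≤ ‖x - metricProj C x‖ * ‖z - metricProj C z‖ + 0 :=
        add_le_add (real_inner_le_norm _ _) <| inner_sub_metricProj_sub_metricProj_nonpos hne hcl
          hconv x _ (metricProj_mem_and_forall_dist_le hne hcl hconv z).1
    _ = _ := add_zero _

end ConvexSet

namespace IsClosedConvexCone

variable {d : ℕ} {C : Set (Euc d)}

lemma norm_sq_eq_norm_sub_metricProj_sq_add (hC : IsClosedConvexCone C) (x : Euc d) :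
    ‖x‖ ^ 2 = ‖x - metricProj C x‖ ^ 2 + ‖metricProj C x‖ ^ 2 := by
  simpa only [sub_add_cancel, hC.inner_sub_metricProj_metricProj x, mul_zero, add_zero]
    using norm_add_sq_real (x - metricProj C x) (metricProj C x)

lemma norm_sub_metricProj_le (hC : IsClosedConvexCone C) (x : Euc d) :
    ‖x - metricProj C x‖ ≤ ‖x‖ :=
  (sq_le_sq₀ (norm_nonneg _) (norm_nonneg _)).1 <| by
    rw [hC.norm_sq_eq_norm_sub_metricProj_sq_add x]
    exact le_add_of_nonneg_right (sq_nonneg _)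

lemma cos_mul_norm_le_norm_metricProj (hC : IsClosedConvexCone C) {y : Euc d} {δ : ℝ}
    (hδ : δ ≤ Real.pi) (hy : angDist C y ≤ δ) :
    Real.cos δ * ‖y‖ ≤ ‖metricProj C y‖ := by
  rcases eq_or_ne y 0 with rfl | hy0
  · simp
  have hpos : 0 < ‖y‖ := norm_pos_iff.2 hy0
  rw [angDist, if_neg hy0] at hy
  have ht0 : 0 ≤ ‖metricProj C y‖ / ‖y‖ := by positivity
  have ht1 : ‖metricProj C y‖ / ‖y‖ ≤ 1 :=
    div_le_one_of_le₀ (hC.norm_metricProj_le y) hpos.le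
  have hcos : Real.cos δ ≤ ‖metricProj C y‖ / ‖y‖ :=
    calc Real.cos δ ≤ Real.cos (Real.arccos (‖metricProj C y‖ / ‖y‖)) :=
          Real.cos_le_cos_of_nonneg_of_le_pi (Real.arccos_nonneg _) hδ hy
      _ = ‖metricProj C y‖ / ‖y‖ := Real.cos_arccos (by linarith) ht1
  rwa [le_div_iff₀ hpos] at hcos

lemma norm_sub_metricProj_le_mul_sin (hC : IsClosedConvexCone C) {y : Euc d} {δ : ℝ}
    (hδ0 : 0 ≤ δ) (hδ : δ ≤ Real.pi / 2) (hy : angDist C y ≤ δ) :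
    ‖y - metricProj C y‖ ≤ ‖y‖ * Real.sin δ := by
  have hcos : 0 ≤ Real.cos δ := Real.cos_nonneg_of_mem_Icc ⟨by linarith [Real.pi_pos], hδ⟩
  have hsin : 0 ≤ Real.sin δ := Real.sin_nonneg_of_nonneg_of_le_pi hδ0 (by linarith)
  have hproj := hC.cos_mul_norm_le_norm_metricProj (by linarith) hy
  refine (sq_le_sq₀ (norm_nonneg _) (by positivity)).1 ?_
  have hpyth := hC.norm_sq_eq_norm_sub_metricProj_sq_add y
  nlinarith [Real.sin_sq_add_cos_sq δ, mul_le_mul hproj hproj (by positivity) (norm_nonneg _)]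

end IsClosedConvexCone

section AngularHausdorff

variable {d : ℕ}

lemma angParallel_pi_div_two (C : Set (Euc d)) : angParallel C (Real.pi / 2) = univ := by
  refine eq_univ_of_forall fun x => ?_
  simp only [angParallel, angDist, mem_ofPred_eq]
  split_ifs
  · exact le_rfl
  · exact Real.arccos_le_pi_div_two.2 (by positivity)

lemma angHaus_nonneg (C D : Set (Euc d)) : 0 ≤ angHaus C D :=
  Real.sInf_nonneg fun _ hl => hl.1

lemma pi_div_two_mem_setOf_angParallel (C D : Set (Euc d)) :
    Real.pi / 2 ∈ {l : ℝ | 0 ≤ l ∧ C ⊆ angParallel D l ∧ D ⊆ angParallel C l} :=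
  ⟨by positivity, by simp [angParallel_pi_div_two], by simp [angParallel_pi_div_two]⟩

lemma angHaus_le_pi_div_two (C D : Set (Euc d)) : angHaus C D ≤ Real.pi / 2 :=
  csInf_le ⟨0, fun _ hl => hl.1⟩ (pi_div_two_mem_setOf_angParallel C D)

lemma angDist_le_angHaus {C D : Set (Euc d)} {y : Euc d} (hy : y ∈ C) :
    angDist D y ≤ angHaus C D :=
  le_csInf ⟨_, pi_div_two_mem_setOf_angParallel C D⟩ fun _ hl => hl.2.1 hy

lemma angHaus_comm (C D : Set (Euc d)) : angHaus C D = angHaus D C := by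
  simp only [angHaus, and_comm (a := C ⊆ _)]

end AngularHausdorff

lemma inner_sub_metricProj_sub_le_sq_mul_sin {d : ℕ} {C D : Set (Euc d)}
    (hC : IsClosedConvexCone C) (hD : IsClosedConvexCone D) (x : Euc d) :
    ⟪x - metricProj C x, metricProj D x - metricProj C x⟫
      ≤ ‖x‖ ^ 2 * Real.sin (angHaus C D) := by
  have hq : angDist C (metricProj D x) ≤ angHaus C D :=
    angHaus_comm D C ▸ angDist_le_angHaus (hD.metricProj_mem x)
  set δ := angHaus C D
  have hsin : 0 ≤ Real.sin δ := Real.sin_nonneg_of_nonneg_of_le_pi (angHaus_nonneg C D)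
    ((angHaus_le_pi_div_two C D).trans (by linarith [Real.pi_pos]))
  calc ⟪x - metricProj C x, metricProj D x - metricProj C x⟫
      ≤ ‖x - metricProj C x‖ * ‖metricProj D x - metricProj C (metricProj D x)‖ :=
        inner_sub_metricProj_le_mul_norm hC.1 hC.2.1 hC.2.2.1 x _
    _ ≤ ‖x‖ * (‖metricProj D x‖ * Real.sin δ) :=
        mul_le_mul (hC.norm_sub_metricProj_le x)
          (hC.norm_sub_metricProj_le_mul_sin (angHaus_nonneg C D)
            (angHaus_le_pi_div_two C D) hq)
          (norm_nonneg _) (norm_nonneg _)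
    _ ≤ ‖x‖ * (‖x‖ * Real.sin δ) := by gcongr; exact hD.norm_metricProj_le x
    _ = ‖x‖ ^ 2 * Real.sin δ := by ring

lemma norm_metricProj_sub_metricProj_sq_le {d : ℕ} {C D : Set (Euc d)}
    (hC : IsClosedConvexCone C) (hD : IsClosedConvexCone D) (x : Euc d) :
    ‖metricProj C x - metricProj D x‖ ^ 2 ≤ 2 * Real.sin (angHaus C D) * ‖x‖ ^ 2 := by
  have hCD := inner_sub_metricProj_sub_le_sq_mul_sin hC hD x
  have hDC := inner_sub_metricProj_sub_le_sq_mul_sin hD hC x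
  rw [angHaus_comm] at hDC
  rw [norm_sub_sq_eq_inner_add_inner x]
  linarith

theorem norm_metricProj_sub_metricProj_le_general {d : ℕ} (C D : Set (Euc d))
    (hC : IsClosedConvexCone C)
    (hD : IsClosedConvexCone D) (x : Euc d) :
    ‖metricProj C x - metricProj D x‖ ≤ ‖x‖ * Real.sqrt (10 * angHaus C D) := by
  have hδ := angHaus_nonneg C D
  have hbound :
      2 * Real.sin (angHaus C D) * ‖x‖ ^ 2 ≤ (‖x‖ * Real.sqrt (10 * angHaus C D)) ^ 2 := by
    rw [mul_pow, Real.sq_sqrt (by positivity)]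
    nlinarith [Real.sin_le hδ, sq_nonneg ‖x‖]
  exact (sq_le_sq₀ (norm_nonneg _) (by positivity)).1
    ((norm_metricProj_sub_metricProj_sq_le hC hD x).trans hbound)

/-- For closed convex cones `C, D` of positive dimension and
any `x ∈ ℝ^d`, `‖Π_C x − Π_D x‖ ≤ ‖x‖ √(10 δ_a(C,D))`. -/
theorem norm_metricProj_sub_metricProj_le {d : ℕ} (hd : 2 ≤ d) (C D : Set (Euc d))
    (hC : IsClosedConvexCone C) (hCp : PosDim C)
    (hD : IsClosedConvexCone D) (hDp : PosDim D) (x : Euc d) :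
    ‖metricProj C x - metricProj D x‖ ≤ ‖x‖ * Real.sqrt (10 * angHaus C D) :=
  norm_metricProj_sub_metricProj_le_general C D hC hD x
end
end

section
/- Let d ≥ 2 and let C ∈ C^d_* be a closed convex cone of positive dimension. If (μ_k)_{k=1}^d and (μ'_k)_{k=1}^d are two families of finite measures on the biconic σ-algebra such that Σ_{k=1}^d g_k(λ)·μ_k(η) = Σ_{k=1}^d g_k(λ)·μ'_k(η) for all 0 ≤ λ < π/2 and all η in the biconic σ-algebra, then μ_k = μ'_k for k = 1, …, d. In particular, the conic support measures Ω_1(C,·), …, Ω_d(C,·) satisfying the conic Steiner formula γ_d(M_λ^a(C,η)) = Σ_{k=1}^d g_k(λ)·Ω_k(C,η) are uniquely determined. -/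
open Set MeasureTheory
open scoped RealInnerProductSpace ENNReal NNReal

attribute [local instance] Classical.propDecidable

noncomputable section

/-! Evaluating the Steiner identity at `λ = 0`, where every `g_k` with `k < d` vanishes,
isolates `μ_d`. Differentiating the rest gives
`∑_{k<d} c_k cos^{k-1} λ sin^{d-k-1} λ · (μ_k η - μ'_k η) = 0` with constants `c_k > 0`;
dividing by `cos^{d-2} λ` and substituting `t = tan λ` turns this into a polynomial in `t`
vanishing on `(0, ∞)`, so all its coefficients vanish. -/

lemma sphVol_pos {n : ℕ} (hn : 1 ≤ n) : 0 < sphVol n :=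
  div_pos (by positivity) (Real.Gamma_pos_of_pos (by positivity))

lemma sphVol_nonneg (n : ℕ) : 0 ≤ sphVol n :=
  div_nonneg (by positivity) (Real.Gamma_nonneg_of_nonneg (by positivity))

lemma gcoef_self (d : ℕ) (l : ℝ) : gcoef d d l = 1 := if_pos rfl

lemma gcoef_zero {d k : ℕ} (hk : k ≠ d) : gcoef d k 0 = 0 := by
  simp [gcoef, hk]

lemma gcoef_nonneg (d k : ℕ) {l : ℝ} (h0 : 0 ≤ l) (h1 : l ≤ Real.pi / 2) :
    0 ≤ gcoef d k l := by
  unfold gcoef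
  split_ifs
  · exact zero_le_one
  refine mul_nonneg (div_nonneg (mul_nonneg (sphVol_nonneg _) (sphVol_nonneg _))
    (sphVol_nonneg _)) (intervalIntegral.integral_nonneg h0 fun t ht => ?_)
  have hcos : 0 ≤ Real.cos t :=
    Real.cos_nonneg_of_mem_Icc ⟨by linarith [ht.1, Real.pi_pos], ht.2.trans h1⟩
  have hsin : 0 ≤ Real.sin t :=
    Real.sin_nonneg_of_nonneg_of_le_pi ht.1 (by linarith [ht.2, Real.pi_pos])
  positivity

lemma hasDerivAt_gcoef {d k : ℕ} (hk : k ≠ d) (x : ℝ) :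
    HasDerivAt (gcoef d k) (sphVol k * sphVol (d - k) / sphVol d *
      (Real.cos x ^ (k - 1) * Real.sin x ^ (d - k - 1))) x := by
  have hcont : Continuous fun t => Real.cos t ^ (k - 1) * Real.sin t ^ (d - k - 1) := by
    fun_prop
  have hg : gcoef d k = fun l => sphVol k * sphVol (d - k) / sphVol d *
      ∫ t in (0 : ℝ)..l, Real.cos t ^ (k - 1) * Real.sin t ^ (d - k - 1) :=
    funext fun _ => if_neg hk
  rw [hg]
  exact (hcont.integral_hasStrictDerivAt 0 x).hasDerivAt.const_mul _

lemma cos_pow_mul_sin_pow_eq_tan_pow_mul {x : ℝ} (hx : Real.cos x ≠ 0) (a b : ℕ) :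
    Real.cos x ^ a * Real.sin x ^ b = Real.tan x ^ b * Real.cos x ^ (a + b) := by
  rw [Real.tan_eq_sin_div_cos, div_pow, pow_add]
  field_simp

lemma eq_zero_of_sum_mul_pow_eq_zero {R ι : Type*} [CommRing R] [IsDomain R] {S : Set R}
    (hS : S.Infinite) {s : Finset ι} {a : ι → R} {n : ι → ℕ} (hn : Set.InjOn n s)
    (h : ∀ t ∈ S, ∑ i ∈ s, a i * t ^ n i = 0) : ∀ i ∈ s, a i = 0 := by
  set P : Polynomial R := ∑ i ∈ s, Polynomial.C (a i) * Polynomial.X ^ n i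
  have hP : P = 0 := Polynomial.eq_zero_of_infinite_isRoot P <| hS.mono fun t ht => by
    simpa [P, Polynomial.eval_finsetSum] using h t ht
  intro i hi
  have hcoeff := congrArg (Polynomial.coeff · (n i)) hP
  simp only [P, Polynomial.finsetSum_coeff, Polynomial.coeff_C_mul_X_pow,
    Polynomial.coeff_zero] at hcoeff
  rwa [Finset.sum_eq_single_of_mem i hi fun j hj hji => if_neg fun hij => hji (hn hj hi hij.symm),
    if_pos rfl] at hcoeff

lemma eq_zero_of_sum_erase_gcoef_mul_eq_zero {d : ℕ} {e : ℕ → ℝ}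
    (h : ∀ l : ℝ, 0 ≤ l → l < Real.pi / 2 →
      ∑ j ∈ (Finset.Icc 1 d).erase d, gcoef d j l * e j = 0) :
    ∀ j ∈ (Finset.Icc 1 d).erase d, e j = 0 := by
  set s := (Finset.Icc 1 d).erase d
  set c : ℕ → ℝ := fun j => sphVol j * sphVol (d - j) / sphVol d
  have hmem : ∀ j ∈ s, 1 ≤ j ∧ j < d := fun j hj => by simpa [s] using hj
  have hderiv : ∀ x ∈ Ioo 0 (Real.pi / 2),
      ∑ j ∈ s, c j * (Real.cos x ^ (j - 1) * Real.sin x ^ (d - j - 1)) * e j = 0 := by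
    intro x hx
    have hF : HasDerivAt (fun l => ∑ j ∈ s, gcoef d j l * e j)
        (∑ j ∈ s, c j * (Real.cos x ^ (j - 1) * Real.sin x ^ (d - j - 1)) * e j) x :=
      HasDerivAt.fun_sum fun j hj => (hasDerivAt_gcoef (hmem j hj).2.ne x).mul_const (e j)
    refine hF.unique ((hasDerivAt_const x 0).congr_of_eventuallyEq ?_)
    filter_upwards [Ioo_mem_nhds hx.1 hx.2] with l hl using h l hl.1.le hl.2
  have hpoly : ∀ t ∈ Ioi (0 : ℝ), ∑ j ∈ s, c j * e j * t ^ (d - j - 1) = 0 := by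
    intro t ht
    have hcos : Real.cos (Real.arctan t) ≠ 0 := (Real.cos_arctan_pos t).ne'
    have hterm : ∀ j ∈ s, c j * (Real.cos (Real.arctan t) ^ (j - 1) *
        Real.sin (Real.arctan t) ^ (d - j - 1)) * e j =
        c j * e j * t ^ (d - j - 1) * Real.cos (Real.arctan t) ^ (d - 2) := by
      intro j hj
      have hexp : j - 1 + (d - j - 1) = d - 2 := by have := hmem j hj; omega
      rw [cos_pow_mul_sin_pow_eq_tan_pow_mul hcos, Real.tan_arctan, hexp]
      ring
    have hx := hderiv (Real.arctan t) ⟨Real.arctan_pos.2 ht, Real.arctan_lt_pi_div_two t⟩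
    rw [Finset.sum_congr rfl hterm, ← Finset.sum_mul] at hx
    exact (mul_eq_zero.1 hx).resolve_right (pow_ne_zero _ hcos)
  have hinj : Set.InjOn (fun j => d - j - 1) s := fun i hi j hj hij => by
    have := hmem i hi; have := hmem j hj; simp only at hij; omega
  intro k hk
  have hck : 0 < c k := by
    have := hmem k hk
    exact div_pos (mul_pos (sphVol_pos this.1) (sphVol_pos (by omega))) (sphVol_pos (by omega))
  exact (mul_eq_zero.1 (eq_zero_of_sum_mul_pow_eq_zero (Set.Ioi_infinite 0) hinj hpoly k hk)
    ).resolve_left hck.ne'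

lemma eq_zero_of_sum_gcoef_mul_eq_zero {d : ℕ} {e : ℕ → ℝ}
    (h : ∀ l : ℝ, 0 ≤ l → l < Real.pi / 2 → ∑ j ∈ Finset.Icc 1 d, gcoef d j l * e j = 0) :
    ∀ j ∈ Finset.Icc 1 d, e j = 0 := by
  intro k hk
  have hd : d ∈ Finset.Icc 1 d := Finset.mem_Icc.2 ⟨(Finset.mem_Icc.1 hk).1.trans
    (Finset.mem_Icc.1 hk).2, le_rfl⟩
  have htop : e d = 0 := by
    have h0 := h 0 le_rfl (by positivity)
    rwa [Finset.sum_eq_single_of_mem d hd fun j _ hj => by rw [gcoef_zero hj, zero_mul],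
      gcoef_self, one_mul] at h0
  rcases eq_or_ne k d with rfl | hkd
  · exact htop
  refine eq_zero_of_sum_erase_gcoef_mul_eq_zero (fun l h0 h1 => ?_) k
    (Finset.mem_erase.2 ⟨hkd, hk⟩)
  rw [Finset.sum_erase _ (by rw [htop, mul_zero])]
  exact h l h0 h1

lemma measure_eq_of_sum_gcoef_mul_eq {α : Type*} {_ : MeasurableSpace α} {d : ℕ}
    {μ μ' : ℕ → Measure α} (hμ : ∀ k, μ k univ ≠ ⊤) (hμ' : ∀ k, μ' k univ ≠ ⊤)
    (h : ∀ l : ℝ, 0 ≤ l → l < Real.pi / 2 → ∀ η : Set α, MeasurableSet η →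
      ∑ k ∈ Finset.Icc 1 d, ENNReal.ofReal (gcoef d k l) * μ k η =
      ∑ k ∈ Finset.Icc 1 d, ENNReal.ofReal (gcoef d k l) * μ' k η) :
    ∀ k ∈ Finset.Icc 1 d, μ k = μ' k := by
  intro k hk
  ext η hη
  have hfin : ∀ j, μ j η ≠ ⊤ := fun j => measure_ne_top_of_subset (subset_univ η) (hμ j)
  have hfin' : ∀ j, μ' j η ≠ ⊤ := fun j => measure_ne_top_of_subset (subset_univ η) (hμ' j)
  have hreal : ∀ l : ℝ, 0 ≤ l → l < Real.pi / 2 →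
      ∑ j ∈ Finset.Icc 1 d, gcoef d j l * ((μ j η).toReal - (μ' j η).toReal) = 0 := by
    intro l h0 h1
    have heq := congrArg ENNReal.toReal (h l h0 h1 η hη)
    simp only [ENNReal.toReal_sum fun j _ => ENNReal.mul_ne_top ENNReal.ofReal_ne_top (hfin j),
      ENNReal.toReal_sum fun j _ => ENNReal.mul_ne_top ENNReal.ofReal_ne_top (hfin' j),
      ENNReal.toReal_mul, ENNReal.toReal_ofReal (gcoef_nonneg d _ h0 h1.le)] at heq
    simp only [mul_sub, Finset.sum_sub_distrib, heq, sub_self]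
  exact (ENNReal.toReal_eq_toReal_iff' (hfin k) (hfin' k)).1
    (sub_eq_zero.1 (eq_zero_of_sum_gcoef_mul_eq_zero hreal k hk))

theorem conicSupportMeasures_unique_general {d : ℕ} (C : Set (Euc d))
    (μ μ' : ℕ → @Measure (Euc d × Euc d) (biconicMS d))
    (hμ : ∀ k, μ k Set.univ ≠ ⊤) (hμ' : ∀ k, μ' k Set.univ ≠ ⊤)
    (h : ∀ l : ℝ, 0 ≤ l → l < Real.pi / 2 →
      ∀ η : Set (Euc d × Euc d), MeasurableSet[biconicMS d] η →
        ∑ k ∈ Finset.Icc 1 d, ENNReal.ofReal (gcoef d k l) * μ k η =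
        ∑ k ∈ Finset.Icc 1 d, ENNReal.ofReal (gcoef d k l) * μ' k η) :
    (∀ k ∈ Finset.Icc 1 d, μ k = μ' k) ∧
    ∀ Ω Ω' : ℕ → @Measure (Euc d × Euc d) (biconicMS d),
      (∀ k, Ω k Set.univ ≠ ⊤) → (∀ k, Ω' k Set.univ ≠ ⊤) →
      (∀ l : ℝ, 0 ≤ l → l < Real.pi / 2 →
        ∀ η : Set (Euc d × Euc d), MeasurableSet[biconicMS d] η →
          stdGaussian d (angLocParallel C l η) =
            ∑ k ∈ Finset.Icc 1 d, ENNReal.ofReal (gcoef d k l) * Ω k η) →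
      (∀ l : ℝ, 0 ≤ l → l < Real.pi / 2 →
        ∀ η : Set (Euc d × Euc d), MeasurableSet[biconicMS d] η →
          stdGaussian d (angLocParallel C l η) =
            ∑ k ∈ Finset.Icc 1 d, ENNReal.ofReal (gcoef d k l) * Ω' k η) →
      ∀ k ∈ Finset.Icc 1 d, Ω k = Ω' k := by
  refine ⟨measure_eq_of_sum_gcoef_mul_eq hμ hμ' h, fun Ω Ω' hΩ hΩ' hSteiner hSteiner' => ?_⟩
  exact measure_eq_of_sum_gcoef_mul_eq hΩ hΩ' fun l h0 h1 η hη =>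
    (hSteiner l h0 h1 η hη).symm.trans (hSteiner' l h0 h1 η hη)

/-- Uniqueness in the conic Steiner formula.  If two
families `(μ_k)`, `(μ'_k)` of finite measures on the biconic σ-algebra
satisfy `Σ_{k=1}^d g_k(λ) μ_k(η) = Σ_{k=1}^d g_k(λ) μ'_k(η)` for all
`0 ≤ λ < π/2` and all biconic `η`, then `μ_k = μ'_k` for `k = 1, …, d`.  In
particular, measures satisfying the conic Steiner formula
`γ_d(M_λ^a(C,η)) = Σ_{k=1}^d g_k(λ) Ω_k(C,η)` are uniquely determined. -/
theorem conicSupportMeasures_unique {d : ℕ} (hd : 2 ≤ d) (C : Set (Euc d))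
    (hC : IsClosedConvexCone C) (hCp : PosDim C)
    (μ μ' : ℕ → @Measure (Euc d × Euc d) (biconicMS d))
    (hμ : ∀ k, μ k Set.univ ≠ ⊤) (hμ' : ∀ k, μ' k Set.univ ≠ ⊤)
    (h : ∀ l : ℝ, 0 ≤ l → l < Real.pi / 2 →
      ∀ η : Set (Euc d × Euc d), MeasurableSet[biconicMS d] η →
        ∑ k ∈ Finset.Icc 1 d, ENNReal.ofReal (gcoef d k l) * μ k η =
        ∑ k ∈ Finset.Icc 1 d, ENNReal.ofReal (gcoef d k l) * μ' k η) :
    (∀ k ∈ Finset.Icc 1 d, μ k = μ' k) ∧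
    ∀ Ω Ω' : ℕ → @Measure (Euc d × Euc d) (biconicMS d),
      (∀ k, Ω k Set.univ ≠ ⊤) → (∀ k, Ω' k Set.univ ≠ ⊤) →
      (∀ l : ℝ, 0 ≤ l → l < Real.pi / 2 →
        ∀ η : Set (Euc d × Euc d), MeasurableSet[biconicMS d] η →
          stdGaussian d (angLocParallel C l η) =
            ∑ k ∈ Finset.Icc 1 d, ENNReal.ofReal (gcoef d k l) * Ω k η) →
      (∀ l : ℝ, 0 ≤ l → l < Real.pi / 2 →
        ∀ η : Set (Euc d × Euc d), MeasurableSet[biconicMS d] η →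
          stdGaussian d (angLocParallel C l η) =
            ∑ k ∈ Finset.Icc 1 d, ENNReal.ofReal (gcoef d k l) * Ω' k η) →
      ∀ k ∈ Finset.Icc 1 d, Ω k = Ω' k :=
  conicSupportMeasures_unique_general C μ μ' hμ hμ' h
end
end
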